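/- An LFSA S is not ω-strongly detectable if and only if in the self-composition CC(S) there exists a run q0' →s1' q1' →s2' q1' →s3' q2' with q0' initial, ℓ(s2') nonempty, the left and right components of q2' distinct, and additionally in S there exists a transition cycle reachable from the left component of q2'. -/

import Mathlib

/-- A labeled finite-state automaton (LFSA): transition relation `δ`,
initial states `Q0`, labeling `lab` (where `none` stands for ε, i.e. unobservable). -/
structure LFSA (Q : Type*) (E : Type*) (A : Type*) where
  δ : Q → E → Q → Prop
  Q0 : Set Q
  lab : E → Option A

namespace LFSA

variable {Q Q1 Q2 E A : Type*}

/-- A run `q →s q'` over a finite event sequence. -/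
inductive Run (S : LFSA Q E A) : Q → List E → Q → Prop
  | nil (q : Q) : Run S q [] q
  | cons {q q' q'' : Q} {e : E} {s : List E} :
      S.δ q e q' → Run S q' s q'' → Run S q (e :: s) q''

/-- Output (label sequence) of an event sequence. -/
def out (S : LFSA Q E A) (s : List E) : List A := s.filterMap S.lab

/-- Generated finite language. -/
def L (S : LFSA Q E A) : Set (List E) := {s | ∃ q0 ∈ S.Q0, ∃ q, S.Run q0 s q}

/-- Current-state estimate after observing `σ`. -/
def M (S : LFSA Q E A) (σ : List A) : Set Q :=
  {q | ∃ q0 ∈ S.Q0, ∃ s : List E, S.out s = σ ∧ S.Run q0 s q}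

/-- Reachability via a nonempty event sequence. -/
def ReachPlus (S : LFSA Q E A) (q q' : Q) : Prop := ∃ s : List E, s ≠ [] ∧ S.Run q s q'

/-- There is a transition cycle reachable from `q` (a cycle at `q` itself counts). -/
def CycleReachableFrom (S : LFSA Q E A) (q : Q) : Prop :=
  ∃ p : Q, (p = q ∨ S.ReachPlus q p) ∧ ∃ s : List E, s ≠ [] ∧ S.Run p s p

/-- `*`-strong detectability. -/
def StarSD (S : LFSA Q E A) : Prop :=
  ∃ k : ℕ, 0 < k ∧ ∀ s ∈ S.L, ∀ σ : List A, σ <+: S.out s → k < σ.length →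
    ∃ q : Q, S.M σ = {q}

/-- ω-strong detectability. -/
def OmegaSD (S : LFSA Q E A) : Prop :=
  ∃ k : ℕ, 0 < k ∧ ∀ (s : ℕ → E) (ρ : ℕ → Q), ρ 0 ∈ S.Q0 →
    (∀ n : ℕ, S.δ (ρ n) (s n) (ρ (n + 1))) →
    ∀ (n : ℕ) (σ : List A), σ <+: S.out (List.ofFn (fun i : Fin n => s i)) →
      k < σ.length → ∃ q : Q, S.M σ = {q}

/-- Concurrent composition: observable transitions with equal labels synchronize,
unobservable transitions interleave. Events are pairs over `Option E` (`none` = ε). -/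
def CC (S1 : LFSA Q1 E A) (S2 : LFSA Q2 E A) :
    LFSA (Q1 × Q2) (Option E × Option E) A where
  δ p ev p' :=
    match ev with
    | (some e, some e') =>
        (∃ a : A, S1.lab e = some a ∧ S2.lab e' = some a) ∧
          S1.δ p.1 e p'.1 ∧ S2.δ p.2 e' p'.2
    | (some e, none) => S1.lab e = none ∧ S1.δ p.1 e p'.1 ∧ p.2 = p'.2
    | (none, some e') => S2.lab e' = none ∧ p.1 = p'.1 ∧ S2.δ p.2 e' p'.2
    | (none, none) => False
  Q0 := {p | p.1 ∈ S1.Q0 ∧ p.2 ∈ S2.Q0}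
  lab ev := ev.1.bind S1.lab

/-- Left projection of an event sequence of a concurrent composition. -/
def lproj (s : List (Option E × Option E)) : List E := s.filterMap Prod.fst

/-- Right projection of an event sequence of a concurrent composition. -/
def rproj (s : List (Option E × Option E)) : List E := s.filterMap Prod.snd

/-- Unobservable reach of a set of states. -/
def UR (S : LFSA Q E A) (X : Set Q) : Set Q :=
  {q | ∃ q0 ∈ X, ∃ s : List E, S.out s = [] ∧ S.Run q0 s q}

/-- One step of the observer (powerset construction). -/
def obsStep (S : LFSA Q E A) (x : Set Q) (a : A) : Set Q :=
  {q' | ∃ q ∈ x, ∃ (e : E) (p : Q), S.lab e = some a ∧ S.δ q e p ∧ q' ∈ S.UR {p}}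

/-- Observer run (deterministic). -/
def obsRun (S : LFSA Q E A) (x : Set Q) (σ : List A) : Set Q := σ.foldl S.obsStep x

/-- The concurrent composition `CC(S_ε, Obs^ε)` of `S` (with events relabeled by their
labels) and a deterministic observer with step function `ostep` and initial state `x0`:
observable transitions move both components, unobservable ones move only the left one. -/
def CCObs (S : LFSA Q E A) (ostep : Set Q → A → Set Q) (x0 : Set Q) :
    LFSA (Q × Set Q) E A where
  δ p e p' := S.δ p.1 e p'.1 ∧
    (∀ a : A, S.lab e = some a → p'.2 = ostep p.2 a) ∧
    (S.lab e = none → p'.2 = p.2)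
  Q0 := {p | p.1 ∈ S.Q0 ∧ p.2 = x0}
  lab := S.lab

/-- A state is reachable if it is an initial state or reachable from one. -/
def Reachable (S : LFSA Q E A) (q : Q) : Prop := ∃ q0 ∈ S.Q0, ∃ s : List E, S.Run q0 s q

/-- Restriction of an automaton to a set of allowed states. -/
def restrict (S : LFSA Q E A) (P : Set Q) : LFSA Q E A where
  δ q e q' := S.δ q e q' ∧ q ∈ P ∧ q' ∈ P
  Q0 := S.Q0 ∩ P
  lab := S.lab

/-- A run all of whose states (including endpoints) lie in `P`. -/
inductive RunIn (S : LFSA Q E A) (P : Set Q) : Q → List E → Q → Prop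
  | nil (q : Q) : q ∈ P → RunIn S P q [] q
  | cons {q q' q'' : Q} {e : E} {s : List E} :
      q ∈ P → S.δ q e q' → RunIn S P q' s q'' → RunIn S P q (e :: s) q''

/-- Normal subautomaton: all faulty transitions removed. -/
def Sn (S : LFSA Q E A) (Ef : Set E) : LFSA Q E A where
  δ q e q' := S.δ q e q' ∧ e ∉ Ef
  Q0 := S.Q0
  lab := S.lab

/-- Faulty subautomaton: faulty transitions together with all their
predecessor and successor transitions. -/
def Sf (S : LFSA Q E A) (Ef : Set E) : LFSA Q E A where
  δ q e q' := S.δ q e q' ∧ ∃ c f d, f ∈ Ef ∧ S.δ c f d ∧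
      ((q = c ∧ e = f ∧ q' = d) ∨ (c = q' ∨ S.ReachPlus q' c) ∨ (q = d ∨ S.ReachPlus d q))
  Q0 := S.Q0
  lab := S.lab

/-- `s` ends with a faulty event. -/
def EndsFaulty (Ef : Set E) (s : List E) : Prop := ∃ (t : List E) (e : E), e ∈ Ef ∧ s = t ++ [e]

/-- `E_f`-diagnosability. -/
def Diag (S : LFSA Q E A) (Ef : Set E) : Prop :=
  ∃ k : ℕ, ∀ s ∈ S.L, EndsFaulty Ef s → ∀ s' : List E, s ++ s' ∈ S.L → k < s'.length →
    ∀ s'' ∈ S.L, S.out s'' = S.out (s ++ s') → ∃ e ∈ Ef, e ∈ s''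

/-- `E_f`-predictability. -/
def Pred (S : LFSA Q E A) (Ef : Set E) : Prop :=
  ∃ k : ℕ, ∀ s ∈ S.L, EndsFaulty Ef s →
    ∃ s' : List E, s' <+: s ∧ (∀ e ∈ s', e ∉ Ef) ∧
      ∀ u v : List E, u ++ v ∈ S.L → S.out s' = S.out u → (∀ e ∈ u, e ∉ Ef) →
        k < v.length → ∃ e ∈ Ef, e ∈ v

/-- Current-state opacity. -/
def CSO (S : LFSA Q E A) (QS : Set Q) : Prop :=
  ∀ q0 ∈ S.Q0, ∀ (s : List E) (q : Q), S.Run q0 s q → q ∈ QS →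
    ∃ q0' ∈ S.Q0, ∃ (s' : List E) (q' : Q), S.Run q0' s' q' ∧ q' ∉ QS ∧ S.out s = S.out s'

/-- Initial-state opacity. -/
def ISO (S : LFSA Q E A) (QS : Set Q) : Prop :=
  ∀ q0 ∈ S.Q0 ∩ QS, ∀ (s : List E) (q : Q), S.Run q0 s q →
    ∃ q0' ∈ S.Q0 \ QS, ∃ (s' : List E) (q' : Q), S.Run q0' s' q' ∧ S.out s = S.out s'

/-- Infinite-step opacity. -/
def InfSO (S : LFSA Q E A) (QS : Set Q) : Prop :=
  ∀ q0 ∈ S.Q0, ∀ (s1 : List E) (q1 : Q) (s2 : List E) (q2 : Q),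
    S.Run q0 s1 q1 → S.Run q1 s2 q2 → q1 ∈ QS →
    ∃ q0' ∈ S.Q0, ∃ (s1' : List E) (q1' : Q) (s2' : List E) (q2' : Q),
      S.Run q0' s1' q1' ∧ S.Run q1' s2' q2' ∧ q1' ∉ QS ∧
        S.out s1 = S.out s1' ∧ S.out s2 = S.out s2'

/-- `K`-step opacity. -/
def KSO (S : LFSA Q E A) (QS : Set Q) (K : ℕ) : Prop :=
  ∀ q0 ∈ S.Q0, ∀ (s1 : List E) (q1 : Q) (s2 : List E) (q2 : Q),
    S.Run q0 s1 q1 → S.Run q1 s2 q2 → q1 ∈ QS → (S.out s2).length ≤ K →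
    ∃ q0' ∈ S.Q0, ∃ (s1' : List E) (q1' : Q) (s2' : List E) (q2' : Q),
      S.Run q0' s1' q1' ∧ S.Run q1' s2' q2' ∧ q1' ∉ QS ∧
        S.out s1 = S.out s1' ∧ S.out s2 = S.out s2'

/-- Strong current-state opacity: the matching run is entirely non-secret. -/
def SCSO (S : LFSA Q E A) (QS : Set Q) : Prop :=
  ∀ q0 ∈ S.Q0, ∀ (s : List E) (q : Q), S.Run q0 s q → q ∈ QS →
    ∃ q0' ∈ S.Q0, ∃ (s' : List E) (q' : Q), S.RunIn QSᶜ q0' s' q' ∧ S.out s = S.out s'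

/-- Strong initial-state opacity. -/
def SISO (S : LFSA Q E A) (QS : Set Q) : Prop :=
  ∀ q0 ∈ S.Q0 ∩ QS, ∀ (s : List E) (q : Q), S.Run q0 s q →
    ∃ q0' ∈ S.Q0 \ QS, ∃ (s' : List E) (q' : Q), S.RunIn QSᶜ q0' s' q' ∧ S.out s = S.out s'

/-- Strong infinite-step opacity. -/
def SInfSO (S : LFSA Q E A) (QS : Set Q) : Prop :=
  ∀ q0 ∈ S.Q0, ∀ (s1 : List E) (q1 : Q) (s2 : List E) (q2 : Q),
    S.Run q0 s1 q1 → S.Run q1 s2 q2 → q1 ∈ QS →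
    ∃ q0' ∈ S.Q0, ∃ (s1' : List E) (q1' : Q) (s2' : List E) (q2' : Q),
      S.RunIn QSᶜ q0' s1' q1' ∧ S.RunIn QSᶜ q1' s2' q2' ∧
        S.out s1 = S.out s1' ∧ S.out s2 = S.out s2'

/-- Strong `K`-step opacity. -/
def SKSO (S : LFSA Q E A) (QS : Set Q) (K : ℕ) : Prop :=
  ∀ q0 ∈ S.Q0, ∀ (s1 : List E) (q1 : Q) (s2 : List E) (q2 : Q),
    S.Run q0 s1 q1 → S.Run q1 s2 q2 → q1 ∈ QS → (S.out s2).length ≤ K →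
    ∃ q0' ∈ S.Q0, ∃ (s1' : List E) (q1' : Q) (s2' : List E) (q2' : Q),
      S.RunIn QSᶜ q0' s1' q1' ∧ S.RunIn QSᶜ q1' s2' q2' ∧
        S.out s1 = S.out s1' ∧ S.out s2 = S.out s2'

/-- Observer step of the secret-deleted subautomaton `S_dss`. -/
def dssObsStep (S : LFSA Q E A) (QS : Set Q) : Set Q → A → Set Q :=
  (S.restrict QSᶜ).obsStep

/-- Initial observer state of the secret-deleted subautomaton. -/
def dssInit (S : LFSA Q E A) (QS : Set Q) : Set Q :=
  (S.restrict QSᶜ).UR (S.restrict QSᶜ).Q0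

end LFSA

/-! A pair of runs of `S` with the same observation is a run of `CC(S)`. If `S` is not
ω-strongly detectable, some infinite run of `S` has an observation longer than `|Q|²` that is
also produced by a run ending in a different state; the composed run then repeats a state of
`Q × Q` around a segment with nonempty observation, and the infinite run continues from the left
end state through finitely many states, hence through a cycle. Conversely, going `k + 1` times
around the observable cycle of `CC(S)` produces two runs with the same observation of length
`> k` ending in distinct states, and the left one extends forever through the reachable cycle of
`S`, so no bound `k` works. -/

theorem List.IsPrefix.eq_ofFn {α : Type*} {f : ℕ → α} {n : ℕ} {l : List α}
    (h : l <+: List.ofFn fun i : Fin n => f i) : l = List.ofFn fun i : Fin l.length => f i := by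
  refine List.ext_getElem (by simp) fun i hi _ => ?_
  rw [h.getElem hi]
  simp

namespace LFSA

variable {Q Q1 Q2 E A : Type*}

section Runs

variable {S : LFSA Q E A}

theorem Run.append {q q' q'' : Q} {s t : List E} (h : S.Run q s q') (h' : S.Run q' t q'') :
    S.Run q (s ++ t) q'' := by
  induction h with
  | nil => exact h'
  | cons hd _ ih => exact .cons hd (ih h')

theorem Run.single {q q' : Q} {e : E} (h : S.δ q e q') : S.Run q [e] q' :=
  .cons h (.nil q')

theorem Run.flatten_replicate {q : Q} {w : List E} (h : S.Run q w q) (m : ℕ) :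
    S.Run q (List.replicate m w).flatten q := by
  induction m with
  | zero => exact .nil q
  | succ m ih => simpa [List.replicate_succ] using h.append ih

theorem out_append (s t : List E) : S.out (s ++ t) = S.out s ++ S.out t :=
  List.filterMap_append

theorem length_out_flatten_replicate (w : List E) (m : ℕ) :
    (S.out (List.replicate m w).flatten).length = m * (S.out w).length := by
  simp [out, List.filterMap_flatten, List.length_flatten]

theorem Run.exists_of_out_eq_cons {q q' : Q} {s : List E} {a : A} {τ : List A}
    (h : S.Run q s q') (hs : S.out s = a :: τ) :
    ∃ q₁ q₂ u e v, S.Run q u q₁ ∧ S.out u = [] ∧ S.lab e = some a ∧ S.δ q₁ e q₂ ∧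
      S.Run q₂ v q' ∧ S.out v = τ := by
  induction h with
  | nil => simp [out] at hs
  | @cons q q₂ q' e s hδ hv ih =>
    cases hlab : S.lab e with
    | none =>
      obtain ⟨q₁, q₂', u, e', v, hu, hu', he', hδ', hv', hv''⟩ :=
        ih (by simpa [out, hlab] using hs)
      have hu'' : S.out (e :: u) = [] := by simpa [out, hlab] using hu'
      exact ⟨q₁, q₂', e :: u, e', v, .cons hδ hu, hu'', he', hδ', hv', hv''⟩
    | some b =>
      obtain ⟨rfl, hτ⟩ : b = a ∧ S.out s = τ := by simpa [out, hlab] using hs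
      exact ⟨q, q₂, [], e, s, .nil q, rfl, hlab, hδ, hv, hτ⟩

/-- Each observable step either revisits a state of `V`, closing an observable cycle, or
enlarges `V`. -/
theorem Run.exists_pump_of_card_le_card_add [Fintype Q] {q₀ q q' : Q} {s : List E}
    (h : S.Run q s q') (hq : ∃ u, S.Run q₀ u q) (V : Finset Q)
    (hV : ∀ v ∈ V, (∃ u, S.Run q₀ u v) ∧ ∃ w, S.Run v w q ∧ S.out w ≠ [])
    (hcard : Fintype.card Q ≤ V.card + (S.out s).length) :
    ∃ p u w v, S.Run q₀ u p ∧ S.Run p w p ∧ S.out w ≠ [] ∧ S.Run p v q' := by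
  classical
  induction h generalizing V with
  | nil q =>
    have hV_univ : V = Finset.univ :=
      V.eq_univ_of_card (le_antisymm V.card_le_univ (by simpa [out] using hcard))
    obtain ⟨⟨u, hu⟩, w, hw, hne⟩ := hV q (hV_univ ▸ Finset.mem_univ q)
    exact ⟨q, u, w, [], hu, hw, hne, .nil q⟩
  | @cons q q₁ q' e s hδ hs ih =>
    obtain ⟨u, hu⟩ := hq
    have hV₁ : ∀ v ∈ V, (∃ u, S.Run q₀ u v) ∧ ∃ w, S.Run v w q₁ ∧ S.out w ≠ [] := by
      intro v hv
      obtain ⟨hv₀, w, hw, hne⟩ := hV v hv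
      exact ⟨hv₀, w ++ [e], hw.append (.single hδ), by simp [out_append, hne]⟩
    cases hlab : S.lab e with
    | none =>
      exact ih ⟨u ++ [e], hu.append (.single hδ)⟩ V hV₁ (by simpa [out, hlab] using hcard)
    | some a =>
      by_cases hqV : q ∈ V
      · obtain ⟨-, w, hw, hne⟩ := hV q hqV
        exact ⟨q, u, w, e :: s, hu, hw, hne, .cons hδ hs⟩
      · refine ih ⟨u ++ [e], hu.append (.single hδ)⟩ (insert q V) ?_ ?_
        · simp only [Finset.mem_insert, forall_eq_or_imp]
          exact ⟨⟨⟨u, hu⟩, [e], .single hδ, by simp [out, hlab]⟩, hV₁⟩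
        · rw [Finset.card_insert_of_notMem hqV]
          simp only [out, List.filterMap_cons, hlab, List.length_cons] at hcard ⊢
          omega

theorem Run.exists_pump_of_card_le [Fintype Q] {q q' : Q} {s : List E} (h : S.Run q s q')
    (hcard : Fintype.card Q ≤ (S.out s).length) :
    ∃ p u w v, S.Run q u p ∧ S.Run p w p ∧ S.out w ≠ [] ∧ S.Run p v q' :=
  h.exists_pump_of_card_le_card_add ⟨[], .nil q⟩ ∅ (by simp) (by simpa using hcard)

end Runs

section InfiniteRuns

variable {S : LFSA Q E A}

def IsInfiniteRun (S : LFSA Q E A) (s : ℕ → E) (ρ : ℕ → Q) : Prop :=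
  ∀ n, S.δ (ρ n) (s n) (ρ (n + 1))

variable {s : ℕ → E} {ρ : ℕ → Q}

theorem IsInfiniteRun.shift (h : S.IsInfiniteRun s ρ) (m : ℕ) :
    S.IsInfiniteRun (fun n => s (m + n)) (fun n => ρ (m + n)) :=
  fun n => h (m + n)

theorem IsInfiniteRun.run_ofFn (h : S.IsInfiniteRun s ρ) (n : ℕ) :
    S.Run (ρ 0) (List.ofFn fun i : Fin n => s i) (ρ n) := by
  induction n with
  | zero => exact .nil _
  | succ n ih =>
    rw [List.ofFn_succ', List.concat_eq_append]
    exact ih.append (.single (h n))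

theorem IsInfiniteRun.run_of_prefix (h : S.IsInfiniteRun s ρ) {n : ℕ} {l : List E}
    (hl : l <+: List.ofFn fun i : Fin n => s i) : S.Run (ρ 0) l (ρ l.length) := by
  have := h.run_ofFn l.length
  rwa [← hl.eq_ofFn] at this

theorem IsInfiniteRun.cycleReachableFrom [Finite Q] (h : S.IsInfiniteRun s ρ) :
    S.CycleReachableFrom (ρ 0) := by
  obtain ⟨i, j, hij, hρ⟩ : ∃ i j, i < j ∧ ρ i = ρ j := by
    obtain ⟨i, j, hne, hρ⟩ := Finite.exists_ne_map_eq_of_infinite ρ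
    rcases hne.lt_or_gt with hlt | hlt
    exacts [⟨i, j, hlt, hρ⟩, ⟨j, i, hlt, hρ.symm⟩]
  have hcycle : S.Run (ρ i) (List.ofFn fun k : Fin (j - i) => s (i + k)) (ρ i) := by
    simpa [hρ, Nat.add_sub_cancel' hij.le] using (h.shift i).run_ofFn (j - i)
  refine ⟨ρ i, ?_, _, by simp; omega, hcycle⟩
  rcases Nat.eq_zero_or_pos i with rfl | hi
  · exact .inl rfl
  · exact .inr ⟨_, by simp; omega, h.run_ofFn i⟩

theorem exists_isInfiniteRun_of_forall_exists_mem (X : Set Q)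
    (hX : ∀ x ∈ X, ∃ e, ∃ y ∈ X, S.δ x e y) {q : Q} (hq : q ∈ X) :
    ∃ s ρ, ρ 0 = q ∧ S.IsInfiniteRun s ρ := by
  have : Nonempty E := let ⟨e, _⟩ := hX q hq; ⟨e⟩
  choose! e f hfX hδ using hX
  have hmem : ∀ n, f^[n] q ∈ X := fun n => by
    induction n with
    | zero => exact hq
    | succ n ih => rw [Function.iterate_succ_apply']; exact hfX _ ih
  refine ⟨fun n => e (f^[n] q), fun n => f^[n] q, rfl, fun n => ?_⟩
  simpa only [Function.iterate_succ_apply'] using hδ _ (hmem n)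

theorem CycleReachableFrom.exists_isInfiniteRun {q : Q} (h : S.CycleReachableFrom q) :
    ∃ s ρ, ρ 0 = q ∧ S.IsInfiniteRun s ρ := by
  obtain ⟨p, hp, w, hw, hcycle⟩ := h
  obtain ⟨e, w, rfl⟩ := List.exists_cons_of_ne_nil hw
  refine exists_isInfiniteRun_of_forall_exists_mem {x | ∃ u, S.Run x u p} ?_ ?_
  · rintro x ⟨_ | ⟨e', u⟩, hu⟩
    · cases hu
      cases hcycle with
      | cons hδ hw => exact ⟨e, _, ⟨w, hw⟩, hδ⟩
    · cases hu with
      | cons hδ hu => exact ⟨e', _, ⟨u, hu⟩, hδ⟩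
  · rcases hp with rfl | ⟨u, -, hu⟩
    exacts [⟨[], .nil _⟩, ⟨u, hu⟩]

theorem Run.exists_isInfiniteRun_ofFn_eq {q₀ q : Q} {u : List E} (hu : S.Run q₀ u q)
    (h : ∃ s ρ, ρ 0 = q ∧ S.IsInfiniteRun s ρ) :
    ∃ s ρ, ρ 0 = q₀ ∧ S.IsInfiniteRun s ρ ∧ (List.ofFn fun i : Fin u.length => s i) = u := by
  induction hu with
  | nil q =>
    obtain ⟨s, ρ, hρ, hs⟩ := h
    exact ⟨s, ρ, hρ, hs, rfl⟩
  | @cons q₀ q₁ q e u hδ _ ih =>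
    obtain ⟨s, ρ, hρ, hs, hu⟩ := ih h
    refine ⟨fun | 0 => e | n + 1 => s n, fun | 0 => q₀ | n + 1 => ρ n, rfl, ?_, ?_⟩
    · rintro (_ | n)
      exacts [show S.δ q₀ e (ρ 0) from hρ ▸ hδ, hs n]
    · simpa [List.ofFn_succ] using hu

end InfiniteRuns

section Composition

variable {S1 : LFSA Q1 E A} {S2 : LFSA Q2 E A}

theorem Run.of_cc {p p' : Q1 × Q2} {s : List (Option E × Option E)}
    (h : (S1.CC S2).Run p s p') :
    S1.Run p.1 (lproj s) p'.1 ∧ S2.Run p.2 (rproj s) p'.2 ∧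
      S1.out (lproj s) = (S1.CC S2).out s ∧ S2.out (rproj s) = (S1.CC S2).out s := by
  induction h with
  | nil => exact ⟨.nil _, .nil _, rfl, rfl⟩
  | @cons p p₁ p' ev s hδ _ ih =>
    obtain ⟨h1, h2, ho1, ho2⟩ := ih
    rcases ev with ⟨_ | e, _ | e'⟩
    · exact hδ.elim
    · obtain ⟨hlab, hp, hδ⟩ := hδ
      exact ⟨hp ▸ h1, .cons hδ h2, by simpa [lproj, out, CC] using ho1,
        by simpa [rproj, out, CC, hlab] using ho2⟩
    · obtain ⟨hlab, hδ, hp⟩ := hδ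
      exact ⟨.cons hδ h1, hp ▸ h2, by simpa [lproj, out, CC, hlab] using ho1,
        by simpa [rproj, out, CC, hlab] using ho2⟩
    · obtain ⟨⟨a, hlab, hlab'⟩, hδ, hδ'⟩ := hδ
      exact ⟨.cons hδ h1, .cons hδ' h2, by simpa [lproj, out, CC, hlab] using ho1,
        by simpa [rproj, out, CC, hlab, hlab'] using ho2⟩

theorem Run.cc_of_out_eq_nil_right {qb qb' : Q2} {sb : List E} (h : S2.Run qb sb qb')
    (hout : S2.out sb = []) (qa : Q1) :
    ∃ s, (S1.CC S2).Run (qa, qb) s (qa, qb') ∧ (S1.CC S2).out s = [] := by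
  induction h with
  | nil => exact ⟨[], .nil _, rfl⟩
  | @cons q q' q'' e sb hδ _ ih =>
    obtain ⟨hlab, hsb⟩ : S2.lab e = none ∧ S2.out sb = [] := by
      simpa [out, Option.eq_none_iff_forall_ne_some] using hout
    obtain ⟨s, hs, hs'⟩ := ih hsb
    exact ⟨(none, some e) :: s, .cons (q' := (qa, q')) ⟨hlab, rfl, hδ⟩ hs,
      by simpa [out, CC] using hs'⟩

theorem Run.cc_of_out_eq {qa qa' : Q1} {qb qb' : Q2} {sa sb : List E}
    (ha : S1.Run qa sa qa') (hb : S2.Run qb sb qb') (hout : S1.out sa = S2.out sb) :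
    ∃ s, (S1.CC S2).Run (qa, qb) s (qa', qb') ∧ (S1.CC S2).out s = S1.out sa := by
  induction ha generalizing qb sb with
  | nil qa =>
    obtain ⟨s, hs, hs'⟩ := hb.cc_of_out_eq_nil_right hout.symm qa
    exact ⟨s, hs, hs'⟩
  | @cons qa q₁ qa' e sa hδ _ ih =>
    cases hlab : S1.lab e with
    | none =>
      obtain ⟨s, hs, hs'⟩ := ih hb (by simpa [out, hlab] using hout)
      exact ⟨(some e, none) :: s, .cons (q' := (q₁, qb)) ⟨hlab, hδ, rfl⟩ hs,
        by simpa [out, CC, hlab] using hs'⟩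
    | some a =>
      obtain ⟨qb₁, qb₂, u, e', v, hu, hu', hlab', hδ', hv, hv'⟩ :=
        hb.exists_of_out_eq_cons (by simpa [out, hlab] using hout.symm)
      obtain ⟨s₁, hs₁, hs₁'⟩ := hu.cc_of_out_eq_nil_right hu' qa
      obtain ⟨s₂, hs₂, hs₂'⟩ := ih hv hv'.symm
      refine ⟨s₁ ++ (some e, some e') :: s₂,
        hs₁.append (.cons ⟨⟨a, hlab, hlab'⟩, hδ, hδ'⟩ hs₂), ?_⟩
      rw [out_append, hs₁']
      simpa [out, CC, hlab] using hs₂'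

end Composition

theorem not_omegaSD_of_cc_pump {S : LFSA Q E A} {q0' q1' q2' : Q × Q}
    {s1' s2' s3' : List (Option E × Option E)} (hq0 : q0' ∈ (S.CC S).Q0)
    (h1 : (S.CC S).Run q0' s1' q1') (h2 : (S.CC S).Run q1' s2' q1')
    (h3 : (S.CC S).Run q1' s3' q2') (hs2 : (S.CC S).out s2' ≠ [])
    (hne : q2'.1 ≠ q2'.2) (hcycle : S.CycleReachableFrom q2'.1) : ¬ S.OmegaSD := by
  rintro ⟨k, -, hk⟩
  set t := s1' ++ (List.replicate (k + 1) s2').flatten ++ s3'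
  have ht : (S.CC S).Run q0' t q2' := (h1.append (h2.flatten_replicate _)).append h3
  have hlen : k < ((S.CC S).out t).length := by
    have : (k + 1) * 1 ≤ (k + 1) * ((S.CC S).out s2').length :=
      Nat.mul_le_mul_left _ (List.length_pos_iff.mpr hs2)
    simp only [t, out_append, List.length_append, length_out_flatten_replicate]
    omega
  obtain ⟨hl, hr, hlout, hrout⟩ := ht.of_cc
  obtain ⟨s, ρ, hρ0, hρ, hs⟩ := hl.exists_isInfiniteRun_ofFn_eq hcycle.exists_isInfiniteRun
  obtain ⟨q, hq⟩ := hk s ρ (hρ0 ▸ hq0.1) hρ (lproj t).length _ (by rw [hs]) (hlout ▸ hlen)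
  have hmem1 : q2'.1 ∈ S.M (S.out (lproj t)) := ⟨q0'.1, hq0.1, _, rfl, hl⟩
  have hmem2 : q2'.2 ∈ S.M (S.out (lproj t)) := ⟨q0'.2, hq0.2, _, hrout.trans hlout.symm, hr⟩
  rw [hq] at hmem1 hmem2
  exact hne (hmem1.trans hmem2.symm)

theorem exists_cc_pump_of_not_omegaSD [Fintype Q] {S : LFSA Q E A} (h : ¬ S.OmegaSD) :
    ∃ q0' ∈ (S.CC S).Q0, ∃ (q1' q2' : Q × Q) (s1' s2' s3' : List (Option E × Option E)),
      (S.CC S).Run q0' s1' q1' ∧ (S.CC S).Run q1' s2' q1' ∧ (S.CC S).Run q1' s3' q2' ∧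
      (S.CC S).out s2' ≠ [] ∧ q2'.1 ≠ q2'.2 ∧ S.CycleReachableFrom q2'.1 := by
  obtain ⟨s, ρ, hρ0, hρ, n, σ, hσ, hlen, hM⟩ : ∃ (s : ℕ → E) (ρ : ℕ → Q), ρ 0 ∈ S.Q0 ∧
      S.IsInfiniteRun s ρ ∧ ∃ (n : ℕ) (σ : List A),
        σ <+: S.out (List.ofFn fun i : Fin n => s i) ∧ Fintype.card (Q × Q) < σ.length ∧
        ∀ q, S.M σ ≠ {q} := by
    by_contra! hall
    exact h ⟨Fintype.card (Q × Q) + 1, Nat.succ_pos _,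
      fun s ρ hρ0 hρ n σ hσ hlen => hall s ρ hρ0 hρ n σ hσ (by omega)⟩
  obtain ⟨τ, hτ⟩ := hσ
  obtain ⟨u, _, hw, hu : S.out u = σ, -⟩ := List.filterMap_eq_append_iff.mp hτ.symm
  have hrun : S.Run (ρ 0) u (ρ u.length) := hρ.run_of_prefix (hw ▸ List.prefix_append _ _)
  obtain ⟨y, ⟨q0, hq0, u', hu', hrun'⟩, hy⟩ : ∃ y ∈ S.M σ, y ≠ ρ u.length := by
    by_contra! hall
    exact hM _ (Set.eq_singleton_iff_unique_mem.mpr ⟨⟨ρ 0, hρ0, u, hu, hrun⟩, hall⟩)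
  obtain ⟨t, ht, hout⟩ := hrun.cc_of_out_eq hrun' (hu.trans hu'.symm)
  obtain ⟨q1', s1', s2', s3', h1, h2, hs2, h3⟩ :=
    ht.exists_pump_of_card_le (by rw [hout, hu]; exact hlen.le)
  exact ⟨_, ⟨hρ0, hq0⟩, q1', _, s1', s2', s3', h1, h2, h3, hs2, hy.symm,
    (hρ.shift _).cycleReachableFrom⟩

end LFSA

/-- concurrent-composition characterization of non-ω-strong detectability. -/
theorem stmt2 {Q E A : Type*} [Fintype Q] (S : LFSA Q E A) :
    ¬ S.OmegaSD ↔
      ∃ q0' ∈ (S.CC S).Q0, ∃ (q1' q2' : Q × Q)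
        (s1' s2' s3' : List (Option E × Option E)),
        (S.CC S).Run q0' s1' q1' ∧ (S.CC S).Run q1' s2' q1' ∧ (S.CC S).Run q1' s3' q2' ∧
        (S.CC S).out s2' ≠ [] ∧ q2'.1 ≠ q2'.2 ∧ S.CycleReachableFrom q2'.1 := by
  refine ⟨LFSA.exists_cc_pump_of_not_omegaSD, ?_⟩
  rintro ⟨_, hq0, _, _, _, _, _, h1, h2, h3, hs2, hne, hcycle⟩
  exact LFSA.not_omegaSD_of_cc_pump hq0 h1 h2 h3 hs2 hne hcycle
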